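/- arXiv:2305.01489 — 6 statements merged into one kernel-verified Lean document; each statement's English description precedes it below -/
import Mathlib

section
/- Let (X, B, μ) be a finite measure space and (E_n) a sequence of measurable sets with ∑ μ(E_n) = ∞. Then μ(limsup E_n) ≥ limsup_{Q→∞} (∑_{n=1}^Q μ(E_n))² / (∑_{n,m=1}^Q μ(E_n ∩ E_m)). -/
/-!
Write `S_Q = ∑_{n<Q} μ(E_n)` and `T_Q = ∑_{n,m<Q} μ(E_n ∩ E_m)`. Cauchy–Schwarz for the function
`∑_{k≤n<Q} 1_{E_n}`, which is supported on `⋃_{i≥k} E_i`, gives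
`(S_Q - S_k)² ≤ T_Q μ(⋃_{i≥k} E_i)`. Applied on the whole space it also gives `S_Q² ≤ T_Q μ(X)`,
so the error `2 S_k S_Q` is `o(T_Q)` as `S_Q → ∞`. Hence the limsup of `S_Q² / T_Q` is at most
`μ(⋃_{i≥k} E_i)` for every `k`, and these measures decrease to `μ(limsup E_n)`.
-/

open MeasureTheory Filter
open scoped ENNReal Topology

namespace MeasureTheory

variable {X : Type*} [MeasurableSpace X]

theorem sq_lintegral_le_lintegral_sq_mul_measure_univ (μ : Measure X) {f : X → ℝ≥0∞}
    (hf : AEMeasurable f μ) :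
    (∫⁻ x, f x ∂μ) ^ 2 ≤ (∫⁻ x, f x ^ 2 ∂μ) * μ Set.univ := by
  have holder := ENNReal.lintegral_mul_le_Lp_mul_Lq μ Real.HolderConjugate.two_two hf
    aemeasurable_const (g := 1)
  simp only [Pi.mul_apply, Pi.one_apply, mul_one, one_pow, lintegral_const,
    one_mul, ENNReal.rpow_two] at holder
  calc (∫⁻ x, f x ∂μ) ^ 2
      ≤ ((∫⁻ x, f x ^ 2 ∂μ) ^ (1 / 2 : ℝ) * μ Set.univ ^ (1 / 2 : ℝ)) ^ 2 := by gcongr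
    _ = (∫⁻ x, f x ^ 2 ∂μ) * μ Set.univ := by
      rw [mul_pow, ← ENNReal.rpow_natCast, ← ENNReal.rpow_natCast, ← ENNReal.rpow_mul,
        ← ENNReal.rpow_mul]
      norm_num

theorem sq_sum_measure_le_sum_measure_inter_mul (μ : Measure X) {E : ℕ → Set X}
    (hE : ∀ n, MeasurableSet (E n)) (s : Finset ℕ) :
    (∑ n ∈ s, μ (E n)) ^ 2 ≤ (∑ n ∈ s, ∑ m ∈ s, μ (E n ∩ E m)) * μ Set.univ := by
  set F : X → ℝ≥0∞ := fun x => ∑ n ∈ s, (E n).indicator 1 x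
  have hF : Measurable F := Finset.measurable_sum s fun n _ => measurable_one.indicator (hE n)
  have hF_sq : ∀ x, F x ^ 2 = ∑ n ∈ s, ∑ m ∈ s, (E n ∩ E m).indicator 1 x := fun x => by
    simp only [F, sq, Finset.sum_mul_sum, Set.inter_indicator_one, Pi.mul_apply]
  have hint : ∫⁻ x, F x ∂μ = ∑ n ∈ s, μ (E n) := by
    rw [lintegral_finsetSum s fun n _ => measurable_one.indicator (hE n)]
    simp only [lintegral_indicator_one (hE _)]
  have hint_sq : ∫⁻ x, F x ^ 2 ∂μ = ∑ n ∈ s, ∑ m ∈ s, μ (E n ∩ E m) := by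
    simp_rw [hF_sq]
    rw [lintegral_finsetSum s fun n _ =>
      Finset.measurable_sum s fun m _ => measurable_one.indicator ((hE n).inter (hE m))]
    refine Finset.sum_congr rfl fun n _ => ?_
    rw [lintegral_finsetSum s fun m _ => measurable_one.indicator ((hE n).inter (hE m))]
    simp only [lintegral_indicator_one ((hE n).inter (hE _))]
  rw [← hint, ← hint_sq]
  exact sq_lintegral_le_lintegral_sq_mul_measure_univ μ hF.aemeasurable

theorem sq_sum_range_le_mul_measure_iUnion_add (μ : Measure X) {E : ℕ → Set X}
    (hE : ∀ n, MeasurableSet (E n)) {k Q : ℕ} (hkQ : k ≤ Q) :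
    (∑ n ∈ Finset.range Q, μ (E n)) ^ 2 ≤
      (∑ n ∈ Finset.range Q, ∑ m ∈ Finset.range Q, μ (E n ∩ E m)) * μ (⋃ i ≥ k, E i) +
        2 * (∑ n ∈ Finset.range k, μ (E n)) * ∑ n ∈ Finset.range Q, μ (E n) := by
  set U := ⋃ i ≥ k, E i
  have hIco : Finset.Ico k Q ⊆ Finset.range Q := fun n hn =>
    Finset.mem_range.mpr (Finset.mem_Ico.mp hn).2
  have hEU : ∀ n ∈ Finset.Ico k Q, E n ⊆ U := fun n hn =>
    Set.subset_iUnion₂ (s := fun i (_ : i ≥ k) => E i) n (Finset.mem_Ico.mp hn).1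
  have tail : (∑ n ∈ Finset.Ico k Q, μ (E n)) ^ 2 ≤
      (∑ n ∈ Finset.range Q, ∑ m ∈ Finset.range Q, μ (E n ∩ E m)) * μ U := by
    have hCS := sq_sum_measure_le_sum_measure_inter_mul (μ.restrict U) hE (Finset.Ico k Q)
    rw [Measure.restrict_apply_univ] at hCS
    calc (∑ n ∈ Finset.Ico k Q, μ (E n)) ^ 2
        = (∑ n ∈ Finset.Ico k Q, μ.restrict U (E n)) ^ 2 := by
          rw [Finset.sum_congr rfl fun n hn => Measure.restrict_eq_self μ (hEU n hn)]
      _ ≤ (∑ n ∈ Finset.Ico k Q, ∑ m ∈ Finset.Ico k Q, μ.restrict U (E n ∩ E m)) * μ U := hCS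
      _ ≤ (∑ n ∈ Finset.range Q, ∑ m ∈ Finset.range Q, μ (E n ∩ E m)) * μ U := by
          gcongr ?_ * _
          calc _ ≤ ∑ n ∈ Finset.Ico k Q, ∑ m ∈ Finset.Ico k Q, μ (E n ∩ E m) := by
                gcongr; exact Measure.restrict_le_self
            _ ≤ ∑ n ∈ Finset.Ico k Q, ∑ m ∈ Finset.range Q, μ (E n ∩ E m) := by gcongr
            _ ≤ _ := Finset.sum_le_sum_of_subset hIco
  set a := ∑ n ∈ Finset.Ico k Q, μ (E n)
  set b := ∑ n ∈ Finset.range k, μ (E n)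
  rw [← Finset.sum_range_add_sum_Ico _ hkQ]
  calc (b + a) ^ 2 = a ^ 2 + 2 * b * a + b ^ 2 := by ring
    _ ≤ a ^ 2 + 2 * b * a + 2 * b ^ 2 := by gcongr; exact le_mul_of_one_le_left' one_le_two
    _ = a ^ 2 + 2 * b * (b + a) := by ring
    _ ≤ _ := by gcongr

theorem limsup_sq_sum_div_le_measure_iUnion (μ : Measure X) [IsFiniteMeasure μ]
    {E : ℕ → Set X} (hE : ∀ n, MeasurableSet (E n)) (hdiv : ∑' n, μ (E n) = ⊤) (k : ℕ) :
    limsup (fun Q : ℕ =>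
      (∑ n ∈ Finset.range Q, μ (E n)) ^ 2 /
        ∑ n ∈ Finset.range Q, ∑ m ∈ Finset.range Q, μ (E n ∩ E m)) atTop
      ≤ μ (⋃ i ≥ k, E i) := by
  set S : ℕ → ℝ≥0∞ := fun Q => ∑ n ∈ Finset.range Q, μ (E n)
  set T : ℕ → ℝ≥0∞ := fun Q => ∑ n ∈ Finset.range Q, ∑ m ∈ Finset.range Q, μ (E n ∩ E m)
  set C := 2 * S k * μ Set.univ
  have hS : Tendsto S atTop (𝓝 ⊤) := hdiv ▸ ENNReal.tendsto_nat_tsum _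
  have hS_ne_top : ∀ Q, S Q ≠ ⊤ := fun Q => ENNReal.sum_ne_top.mpr fun n _ => measure_ne_top μ _
  have hC : C ≠ ⊤ := by simp only [C]; finiteness [hS_ne_top k]
  have bound : ∀ᶠ Q in atTop, S Q ^ 2 / T Q ≤ μ (⋃ i ≥ k, E i) + C / S Q := by
    filter_upwards [eventually_ge_atTop k, hS.eventually_ne ENNReal.zero_ne_top.symm]
      with Q hkQ hSQ
    have hST : S Q ≤ T Q * μ Set.univ / S Q := by
      rw [ENNReal.le_div_iff_mul_le (.inl hSQ) (.inl (hS_ne_top Q)), ← sq]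
      exact sq_sum_measure_le_sum_measure_inter_mul μ hE _
    refine ENNReal.div_le_of_le_mul' ?_
    calc S Q ^ 2 ≤ T Q * μ (⋃ i ≥ k, E i) + 2 * S k * S Q :=
          sq_sum_range_le_mul_measure_iUnion_add μ hE hkQ
      _ ≤ T Q * μ (⋃ i ≥ k, E i) + 2 * S k * (T Q * μ Set.univ / S Q) := by gcongr
      _ = T Q * (μ (⋃ i ≥ k, E i) + C / S Q) := by
          simp only [C, div_eq_mul_inv]; ring
  have hlim : Tendsto (fun Q => μ (⋃ i ≥ k, E i) + C / S Q) atTop (𝓝 (μ (⋃ i ≥ k, E i))) := by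
    simpa using tendsto_const_nhds.add (ENNReal.Tendsto.const_div hS (.inr hC))
  exact (limsup_le_limsup bound).trans_eq hlim.limsup_eq

end MeasureTheory

theorem stmt_0 {X : Type*} [MeasurableSpace X] (μ : Measure X) [IsFiniteMeasure μ]
    (E : ℕ → Set X) (hE : ∀ n, MeasurableSet (E n))
    (hdiv : ∑' n, μ (E n) = ⊤) :
    limsup (fun Q : ℕ =>
      (∑ n ∈ Finset.range Q, μ (E n)) ^ 2 /
        ∑ n ∈ Finset.range Q, ∑ m ∈ Finset.range Q, μ (E n ∩ E m)) atTop
      ≤ μ (limsup E atTop) := by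
  have htail_anti : Antitone fun k => ⋃ i ≥ k, E i := fun k l hkl =>
    Set.biUnion_mono (fun i hi => hkl.trans hi) fun _ _ => le_rfl
  have hlimsup : limsup E atTop = ⋂ k, ⋃ i ≥ k, E i := limsup_eq_iInf_iSup_of_nat
  rw [hlimsup, htail_anti.measure_iInter
    (fun k => (MeasurableSet.biUnion (Set.to_countable _) fun i _ => hE i).nullMeasurableSet)
    ⟨0, measure_ne_top μ _⟩]
  exact le_iInf (limsup_sq_sum_div_le_measure_iUnion μ hE hdiv)
end

section
/- Let S_i(x) = A_i x + t_i, i = 1,…,m, be invertible affine contractions of ℝ^d, with T_i = S_i^{-1}. For a finite word i = (i_1,…,i_n), write T_i = T_{i_1} ∘ ⋯ ∘ T_{i_n} and A_ī for the product A_{i_n} ⋯ A_{i_1}. Then for any Borel set E ⊂ ℝ^d and any x ∈ ℝ^d: T_i(x) − x ∈ E if and only if x ∈ π(ī^∞) + ∑_{k=1}^∞ A_ī^k (E), where π(ī^∞) is the fixed point of the contraction S_{i_n} ∘ ⋯ ∘ S_{i_1}. -/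
/-!
Write `B = A_ī` and `y = T_i x`. The affine map `S_ī` sends `y` to `x`, fixes `π` and has linear
part `B`, so `x - π = B (y - π)`, i.e. `(1 - B)(x - π) = B (y - x)`. As `‖B‖ < 1`, `1 - B` is
invertible with inverse `∑ B^k`, so `x - π = ∑_{k ≥ 1} B^k (y - x)`. Conversely
`x = π + ∑_{k ≥ 1} B^k v` forces `B v = B (y - x)`, hence `v = y - x` since `B` is injective.
-/

theorem List.foldr_comp_eq_comp {ι α : Type*} (f : ι → α → α) (l : List ι) (b : α → α) :
    l.foldr (fun i g => f i ∘ g) b = l.foldr (fun i g => f i ∘ g) id ∘ b := by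
  induction l with
  | nil => rfl
  | cons i l ih => simp only [List.foldr_cons, ih, Function.comp_assoc]

theorem norm_list_prod_lt_one {R : Type*} [SeminormedRing R] :
    ∀ {l : List R}, l ≠ [] → (∀ a ∈ l, ‖a‖ < 1) → ‖l.prod‖ < 1
  | [a], _, h => by simpa using h a (by simp)
  | a :: b :: l, _, h => by
    have hbl : ‖(b :: l).prod‖ < 1 :=
      norm_list_prod_lt_one (List.cons_ne_nil b l) fun c hc => h c (List.mem_cons_of_mem a hc)
    calc ‖(a :: b :: l).prod‖ ≤ ‖a‖ * ‖(b :: l).prod‖ := by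
          rw [List.prod_cons]; exact norm_mul_le _ _
      _ < 1 := mul_lt_one_of_nonneg_of_lt_one_left (norm_nonneg a) (h a (by simp)) hbl.le

section

variable {𝕜 E ι : Type*} [NontriviallyNormedField 𝕜] [NormedAddCommGroup E] [NormedSpace 𝕜 E]

theorem ContinuousLinearMap.injective_list_prod_map (A : ι → E ≃L[𝕜] E) (l : List ι) :
    Function.Injective (l.map fun i => (A i : E →L[𝕜] E)).prod := by
  induction l with
  | nil => exact Function.injective_id
  | cons i l ih => exact (A i).injective.comp ih

theorem ContinuousLinearMap.tsum_pow_succ_apply_eq_iff [CompleteSpace E] {B : E →L[𝕜] E}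
    (hB : ‖B‖ < 1) (u w : E) : ∑' k : ℕ, (B ^ (k + 1)) u = w ↔ w - B w = B u := by
  set G := ∑' k : ℕ, B ^ k
  have hsum : ∑' k : ℕ, (B ^ (k + 1)) u = G (B u) := by
    simp_rw [pow_succ, mul_apply_eq_comp]
    exact ((summable_geometric_of_norm_lt_one hB).hasSum.mapL
      (ContinuousLinearMap.apply 𝕜 E (B u))).tsum_eq
  have hw : w - B w = (1 - B) w := rfl
  rw [hsum, hw]
  constructor
  · rintro rfl
    rw [← mul_apply_eq_comp, mul_neg_geom_series B hB, one_apply_eq_self]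
  · intro h
    rw [← h, ← mul_apply_eq_comp, geom_series_mul_neg B hB, one_apply_eq_self]

theorem foldr_affine_sub_foldr_affine (A : ι → E →L[𝕜] E) (t : ι → E) (l : List ι) (x y : E) :
    l.foldr (fun i g => (fun x => A i x + t i) ∘ g) id x
      - l.foldr (fun i g => (fun x => A i x + t i) ∘ g) id y = (l.map A).prod (x - y) := by
  induction l with
  | nil => rfl
  | cons i l ih =>
    simp only [List.foldr_cons, Function.comp_apply, List.map_cons, List.prod_cons,
      mul_apply_eq_comp, add_sub_add_right_eq_sub, ← map_sub, ih]

theorem foldr_affine_reverse_foldr_inv (A : ι → E ≃L[𝕜] E) (t : ι → E) (l : List ι) (x : E) :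
    l.reverse.foldr (fun i g => (fun x => A i x + t i) ∘ g) id
      (l.foldr (fun i g => (fun y => (A i).symm (y - t i)) ∘ g) id x) = x := by
  induction l generalizing x with
  | nil => rfl
  | cons i l ih =>
    simp only [List.reverse_cons, List.foldr_append, List.foldr_cons, List.foldr_nil,
      Function.comp_id]
    rw [List.foldr_comp_eq_comp, Function.comp_apply, Function.comp_apply,
      ContinuousLinearEquiv.apply_symm_apply, sub_add_cancel, ih]

end

/-- `T_i(x) - x ∈ E` iff `x ∈ π(ī^∞) + ∑_{k=1}^∞ A_ī^k (E)`. -/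
theorem stmt_5 {d : ℕ} {ι : Type*}
    (A : ι → (EuclideanSpace ℝ (Fin d) ≃L[ℝ] EuclideanSpace ℝ (Fin d)))
    (t : ι → EuclideanSpace ℝ (Fin d))
    (hA : ∀ i, ‖(A i : EuclideanSpace ℝ (Fin d) →L[ℝ] EuclideanSpace ℝ (Fin d))‖ < 1)
    (w : List ι) (hw : w ≠ [])
    (π : EuclideanSpace ℝ (Fin d))
    -- `π` is the fixed point of `S_{i_n} ∘ ⋯ ∘ S_{i_1}`
    (hπ : (w.reverse.foldr (fun i g => (fun x => A i x + t i) ∘ g) id) π = π)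
    (E : Set (EuclideanSpace ℝ (Fin d))) (x : EuclideanSpace ℝ (Fin d)) :
    -- `T_{i_1} ∘ ⋯ ∘ T_{i_n} (x) - x ∈ E` ...
    (w.foldr (fun i g => (fun y => (A i).symm (y - t i)) ∘ g) id) x - x ∈ E ↔
      -- ... iff `x ∈ π + (∑_{k=1}^∞ A_ī^k)(E)` with `A_ī = A_{i_n} ⋯ A_{i_1}`
      x ∈ (fun v => π + ∑' k : ℕ,
        (((w.reverse.map
            (fun i => (A i : EuclideanSpace ℝ (Fin d) →L[ℝ] EuclideanSpace ℝ (Fin d)))).prod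
          ^ (k + 1)) v)) '' E := by
  set B := (w.reverse.map
    fun i => (A i : EuclideanSpace ℝ (Fin d) →L[ℝ] EuclideanSpace ℝ (Fin d))).prod
  have hB : ‖B‖ < 1 := norm_list_prod_lt_one (by simpa using hw) (by simpa using fun i _ => hA i)
  set y := w.foldr (fun i g => (fun y => (A i).symm (y - t i)) ∘ g) id x
  have hxπ : x - π = B (y - x) + B (x - π) := by
    rw [← map_add, sub_add_sub_cancel]
    conv_lhs => rw [← foldr_affine_reverse_foldr_inv A t w x, ← hπ]
    exact foldr_affine_sub_foldr_affine (fun i => (A i : _ →L[ℝ] _)) t w.reverse y π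
  have hseries := (ContinuousLinearMap.tsum_pow_succ_apply_eq_iff hB _ (x - π)).2
    (sub_eq_iff_eq_add.2 hxπ)
  constructor
  · exact fun hyx => ⟨y - x, hyx, by simp only [hseries, add_sub_cancel]⟩
  · rintro ⟨v, hv, hvx⟩
    have hBv := (ContinuousLinearMap.tsum_pow_succ_apply_eq_iff hB v (x - π)).1
      (eq_sub_of_add_eq' hvx)
    rwa [← ContinuousLinearMap.injective_list_prod_map A w.reverse
      (hBv.symm.trans (sub_eq_iff_eq_add.2 hxπ))]
end

section
/- Let λ ∈ (1/2, 1) be such that β = 1/λ is an algebraic integer of norm ±2 all of whose Galois conjugates have modulus strictly greater than 1 (a Garsia number). Then there exists C > 0 such that for any n and any two distinct words a, a' ∈ {0,1}^n, |∑_{i=1}^n a_i λ^{i−1} − ∑_{i=1}^n a'_i λ^{i−1}| ≥ C/2^n. -/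
/-!
The difference of two distinct words is `∑ bₖ λᵏ` with `bₖ ∈ {-1, 0, 1}` not all zero; with
`β = 1/λ` it equals `λⁿ R(β)` for the reciprocal polynomial `R`, whose coefficients again lie in
`{-1, 0, 1}`. The minimal polynomial of `β` has constant coefficient `±2`, so it cannot divide `R`:
`R(β)` is a nonzero algebraic integer of `ℚ(β)`, and the absolute value of its norm, the product of
`|σ R(β)|` over the complex embeddings `σ`, is at least `1`. For `σ ≠ id` the geometric series
bounds `|σ R(β)|` by `|σ β|ⁿ⁺¹ / (|σ β| - 1)`, and the product of these `|σ β|` is `2/β`. Hence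
`|R(β)| ≥ c (β/2)ⁿ⁺¹`, i.e. the difference is at least `c / (2ⁿ⁺¹ λ)`.
-/
open Polynomial IntermediateField Finset

theorem Polynomial.aeval_ringHom_apply {A B F : Type*} [Ring A] [Ring B] [FunLike F A B]
    [RingHomClass F A B] (f : F) (x : A) (p : ℤ[X]) : aeval (f x) p = f (aeval x p) :=
  aeval_algHom_apply (RingHom.toIntAlgHom (f : A →+* B)) x p

theorem Polynomial.aeval_eq_pow_mul_aeval_inv_reflect {R S : Type*} [CommSemiring R] [Field S]
    [Algebra R S] {x : S} (hx : x ≠ 0) {p : R[X]} {N : ℕ} (hp : p.natDegree ≤ N) :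
    aeval x p = x ^ N * aeval x⁻¹ (reflect N p) := by
  let := invertibleOfNonzero hx
  rw [aeval_def, aeval_def, ← eval₂_reflect_mul_pow _ x N p hp, invOf_eq_inv, mul_comm]

theorem Polynomial.norm_aeval_ofReal (x : ℝ) (p : ℤ[X]) : ‖aeval (x : ℂ) p‖ = |aeval x p| := by
  rw [← Complex.coe_algebraMap, aeval_algebraMap_apply, Complex.coe_algebraMap, Complex.norm_real,
    Real.norm_eq_abs]

theorem Polynomial.not_dvd_of_abs_coeff_le_one {P R : ℤ[X]} (hP : |P.coeff 0| = 2) (hR0 : R ≠ 0)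
    (hR : ∀ k, |R.coeff k| ≤ 1) : ¬P ∣ R := by
  rintro ⟨S, rfl⟩
  have hS : S ≠ 0 := right_ne_zero_of_mul hR0
  have hP0 : P.coeff 0 ≠ 0 := by rintro h; simp [h] at hP
  have hPt : P.trailingCoeff = P.coeff 0 := by
    rw [trailingCoeff, natTrailingDegree_eq_zero.2 (Or.inr hP0)]
  have h := hR (P * S).natTrailingDegree
  rw [← trailingCoeff, trailingCoeff_mul, hPt, abs_mul, hP] at h
  have := Int.one_le_abs (mt trailingCoeff_eq_zero.1 hS)
  omega

theorem aeval_ne_zero_of_abs_coeff_le_one {S : Type*} [CommRing S] [IsDomain S]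
    [Module.IsTorsionFree ℤ S] {x : S} (hx : IsIntegral ℤ x) (hmin : |(minpoly ℤ x).coeff 0| = 2)
    {R : ℤ[X]} (hR0 : R ≠ 0) (hR : ∀ k, |R.coeff k| ≤ 1) : aeval x R ≠ 0 := fun h =>
  not_dvd_of_abs_coeff_le_one hmin hR0 hR (minpoly.isIntegrallyClosed_dvd hx h)

theorem norm_aeval_le_of_abs_coeff_le_one {R : ℤ[X]} (hR : ∀ k, |R.coeff k| ≤ 1) {n : ℕ}
    (hdeg : R.natDegree < n) {z : ℂ} (hz : 1 < ‖z‖) : ‖aeval z R‖ ≤ ‖z‖ ^ n / (‖z‖ - 1) := by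
  rw [aeval_eq_sum_range' hdeg, le_div_iff₀ (sub_pos.2 hz)]
  calc ‖∑ k ∈ range n, R.coeff k • z ^ k‖ * (‖z‖ - 1)
      ≤ (∑ k ∈ range n, ‖z‖ ^ k) * (‖z‖ - 1) := by
        gcongr
        refine (norm_sum_le _ _).trans (sum_le_sum fun k _ => ?_)
        rw [zsmul_eq_mul, norm_mul, norm_pow, Complex.norm_intCast]
        exact mul_le_of_le_one_left (by positivity) (mod_cast hR k)
    _ = ‖z‖ ^ n - 1 := geom_sum_mul _ _
    _ ≤ ‖z‖ ^ n := by linarith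

section NumberField

variable {K : Type*} [Field K] [NumberField K]

theorem prod_norm_embeddings_eq_abs_norm (x : K) :
    ∏ φ : K →ₐ[ℚ] ℂ, ‖φ x‖ = |(Algebra.norm ℚ x : ℝ)| := by
  rw [← norm_prod, ← Algebra.norm_eq_prod_embeddings, eq_ratCast, Complex.norm_ratCast]

theorem one_le_prod_norm_embeddings {x : K} (hx : IsIntegral ℤ x) (hx0 : x ≠ 0) :
    1 ≤ ∏ φ : K →ₐ[ℚ] ℂ, ‖φ x‖ := by
  obtain ⟨m, hm⟩ := IsIntegrallyClosed.isIntegral_iff.1 (Algebra.isIntegral_norm ℚ hx)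
  have hm0 : m ≠ 0 := by
    rintro rfl
    exact hx0 (by simpa using hm.symm)
  rw [prod_norm_embeddings_eq_abs_norm, ← hm, eq_intCast, Rat.cast_intCast, ← Int.cast_abs]
  exact_mod_cast Int.one_le_abs hm0

open scoped Classical in
theorem prod_sub_one_div_pow_le_norm_aeval {g : K} (hg : IsIntegral ℤ g) (φ₀ : K →ₐ[ℚ] ℂ)
    (hconj : ∀ φ ≠ φ₀, 1 < ‖φ g‖) {R : ℤ[X]} (hR : ∀ k, |R.coeff k| ≤ 1) {n : ℕ}
    (hdeg : R.natDegree < n) (h0 : aeval g R ≠ 0) :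
    (∏ φ ∈ univ.erase φ₀, (‖φ g‖ - 1)) / (∏ φ ∈ univ.erase φ₀, ‖φ g‖) ^ n ≤
      ‖φ₀ (aeval g R)‖ := by
  have hx : IsIntegral ℤ (aeval g R) :=
    adjoin_le_integralClosure hg (aeval_mem_adjoin_singleton ℤ g)
  have hpos : 0 < ∏ φ ∈ univ.erase φ₀, (‖φ g‖ - 1) :=
    prod_pos fun φ hφ => sub_pos.2 (hconj φ (ne_of_mem_erase hφ))
  have hpos' : 0 < ∏ φ ∈ univ.erase φ₀, ‖φ g‖ :=
    prod_pos fun φ hφ => one_pos.trans (hconj φ (ne_of_mem_erase hφ))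
  set c := ∏ φ ∈ univ.erase φ₀, (‖φ g‖ - 1)
  set P := ∏ φ ∈ univ.erase φ₀, ‖φ g‖
  have hbound : ∏ φ ∈ univ.erase φ₀, ‖φ (aeval g R)‖ ≤ P ^ n / c := by
    rw [← prod_pow, ← prod_div_distrib]
    refine prod_le_prod (fun _ _ => norm_nonneg _) fun φ hφ => ?_
    rw [← aeval_ringHom_apply]
    exact norm_aeval_le_of_abs_coeff_le_one hR hdeg (hconj φ (ne_of_mem_erase hφ))
  have h1 : 1 ≤ ‖φ₀ (aeval g R)‖ * (P ^ n / c) :=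
    calc (1 : ℝ) ≤ ∏ φ : K →ₐ[ℚ] ℂ, ‖φ (aeval g R)‖ := one_le_prod_norm_embeddings hx h0
      _ = ‖φ₀ (aeval g R)‖ * ∏ φ ∈ univ.erase φ₀, ‖φ (aeval g R)‖ :=
        (mul_prod_erase _ _ (mem_univ φ₀)).symm
      _ ≤ _ := by gcongr
  rw [mul_div_assoc', le_div_iff₀ hpos, one_mul] at h1
  rwa [div_le_iff₀ (pow_pos hpos' n)]

end NumberField

theorem IntermediateField.AdjoinSimple.abs_norm_gen {L : Type*} [Field L] [CharZero L] {β : L}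
    (hβ : IsIntegral ℤ β) :
    |Algebra.norm ℚ (AdjoinSimple.gen ℚ β)| = |((minpoly ℤ β).coeff 0 : ℚ)| := by
  have hβQ : IsIntegral ℚ β := hβ.tower_top
  have h := Algebra.PowerBasis.norm_gen_eq_coeff_zero_minpoly (adjoin.powerBasis hβQ)
  rw [adjoin.powerBasis_gen hβQ] at h
  -- `h` is stated over `Rat.commRing`, the goal over `Field.toCommRing ℚ`: equal only up to unfolding
  rw [show Algebra.norm ℚ (AdjoinSimple.gen ℚ β) = _ from h, minpoly_gen,
    minpoly.isIntegrallyClosed_eq_field_fractions' ℚ hβ, coeff_map, abs_mul, abs_pow, abs_neg,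
    abs_one, one_pow, one_mul, eq_intCast]

theorem exists_pos_mul_le_norm_aeval {β : ℂ} (hβ : IsIntegral ℤ β)
    (hnorm : |(minpoly ℤ β).coeff 0| = 2)
    (hconj : ∀ z : ℂ, aeval z (minpoly ℤ β) = 0 → 1 < ‖z‖) :
    ∃ c > 0, ∀ (n : ℕ) (R : ℤ[X]), R ≠ 0 → (∀ k, |R.coeff k| ≤ 1) → R.natDegree < n →
      c * (‖β‖ / 2) ^ n ≤ ‖aeval β R‖ := by
  classical
  have : FiniteDimensional ℚ ℚ⟮β⟯ := adjoin.finiteDimensional hβ.tower_top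
  have : NumberField ℚ⟮β⟯ := ⟨⟩
  set g := AdjoinSimple.gen ℚ β
  let φ₀ : ℚ⟮β⟯ →ₐ[ℚ] ℂ := ℚ⟮β⟯.val
  have hφ₀ : φ₀ g = β := AdjoinSimple.coe_gen ℚ β
  have hming : minpoly ℤ g = minpoly ℤ β := by
    rw [← minpoly.algebraMap_eq (algebraMap ℚ⟮β⟯ ℂ).injective g, AdjoinSimple.algebraMap_gen]
  have hg : IsIntegral ℤ g := minpoly.ne_zero_iff.1 (hming ▸ minpoly.ne_zero hβ)
  have hconjK (φ : ℚ⟮β⟯ →ₐ[ℚ] ℂ) : 1 < ‖φ g‖ := by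
    refine hconj _ ?_
    rw [← hming, aeval_ringHom_apply, minpoly.aeval, map_zero]
  have hprod : ∏ φ ∈ univ.erase φ₀, ‖φ g‖ = 2 / ‖β‖ := by
    have h := mul_prod_erase univ (fun φ => ‖φ g‖) (mem_univ φ₀)
    rw [prod_norm_embeddings_eq_abs_norm, ← Rat.cast_abs, AdjoinSimple.abs_norm_gen hβ, hφ₀] at h
    rw [eq_div_iff (one_pos.trans (hφ₀ ▸ hconjK φ₀)).ne', mul_comm, h]
    exact_mod_cast hnorm
  refine ⟨∏ φ ∈ univ.erase φ₀, (‖φ g‖ - 1), prod_pos fun φ _ => sub_pos.2 (hconjK φ),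
    fun n R hR0 hR hdeg => ?_⟩
  have h0 : aeval g R ≠ 0 := aeval_ne_zero_of_abs_coeff_le_one hg (hming ▸ hnorm) hR0 hR
  have key := prod_sub_one_div_pow_le_norm_aeval hg φ₀ (fun φ _ => hconjK φ) hR hdeg h0
  rwa [hprod, div_pow, div_div_eq_mul_div, mul_div_assoc, ← div_pow, ← aeval_ringHom_apply,
    hφ₀] at key

theorem exists_aeval_eq_sum_sub_sum {n : ℕ} {a a' : Fin n → ℝ}
    (ha : ∀ i, a i = 0 ∨ a i = 1) (ha' : ∀ i, a' i = 0 ∨ a' i = 1) (hne : a ≠ a') :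
    ∃ Q : ℤ[X], Q ≠ 0 ∧ (∀ k, |Q.coeff k| ≤ 1) ∧ Q.natDegree < n ∧
      ∀ x : ℝ, ∑ i, a i * x ^ (i : ℕ) - ∑ i, a' i * x ^ (i : ℕ) = aeval x Q := by
  have hdigit (i : Fin n) : ∃ b : ℤ, |b| ≤ 1 ∧ (b : ℝ) = a i - a' i := by
    rcases ha i with h | h <;> rcases ha' i with h' | h'
    · exact ⟨0, by simp [h, h']⟩
    · exact ⟨-1, by simp [h, h']⟩
    · exact ⟨1, by simp [h, h']⟩
    · exact ⟨0, by simp [h, h']⟩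
  choose b hb1 hb using hdigit
  set Q : ℤ[X] := ((degreeLTEquiv ℤ n).symm b : ℤ[X])
  have hQdeg : Q.degree < n := mem_degreeLT.1 ((degreeLTEquiv ℤ n).symm b).2
  have hQb (i : Fin n) : Q.coeff i = b i := congrFun ((degreeLTEquiv ℤ n).apply_symm_apply b) i
  have hQ0 : Q ≠ 0 := by
    intro hQ
    obtain ⟨i, hi⟩ := Function.ne_iff.1 hne
    exact hi (sub_eq_zero.1 (by rw [← hb i, ← hQb i, hQ, coeff_zero, Int.cast_zero]))
  have hQnat : Q.natDegree < n := (natDegree_lt_iff_degree_lt hQ0).2 hQdeg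
  refine ⟨Q, hQ0, fun k => ?_, hQnat, fun x => ?_⟩
  · by_cases hk : k < n
    · exact hQb ⟨k, hk⟩ ▸ hb1 _
    · rw [coeff_eq_zero_of_natDegree_lt (hQnat.trans_le (not_lt.1 hk)), abs_zero]
      exact zero_le_one
  · rw [← sum_sub_distrib, aeval_eq_sum_range' hQnat, ← Fin.sum_univ_eq_sum_range]
    refine sum_congr rfl fun i _ => ?_
    rw [hQb, zsmul_eq_mul, hb, sub_mul]

/-- Garsia's separation lemma: if `1/λ` is a Garsia number (an algebraic integer of
norm `±2` all of whose complex conjugates have modulus `> 1`), then `{0,1}`-polynomials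
in `λ` of degree `< n` are `C/2^n`-separated. -/
theorem stmt_7 (lam : ℝ) (hlam : lam ∈ Set.Ioo (1 / 2 : ℝ) 1)
    (hint : IsIntegral ℤ (1 / lam))
    (hnorm : |(minpoly ℤ (1 / lam)).coeff 0| = 2)
    (hconj : ∀ z : ℂ, Polynomial.aeval z (minpoly ℤ (1 / lam)) = 0 → 1 < ‖z‖) :
    ∃ C > (0 : ℝ), ∀ n : ℕ, ∀ a a' : Fin n → ℝ,
      (∀ i, a i = 0 ∨ a i = 1) → (∀ i, a' i = 0 ∨ a' i = 1) → a ≠ a' →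
      C / 2 ^ n ≤ |(∑ i : Fin n, a i * lam ^ (i : ℕ)) - ∑ i : Fin n, a' i * lam ^ (i : ℕ)| := by
  have hlam0 : 0 < lam := by linarith [hlam.1]
  have hmin : minpoly ℤ ((1 / lam : ℝ) : ℂ) = minpoly ℤ (1 / lam) :=
    minpoly.algebraMap_eq (algebraMap ℝ ℂ).injective _
  obtain ⟨c, hc, hsep⟩ := exists_pos_mul_le_norm_aeval (β := ((1 / lam : ℝ) : ℂ))
    hint.algebraMap (hmin ▸ hnorm) (hmin ▸ hconj)
  refine ⟨c / 2, by positivity, fun n a a' ha ha' hne => ?_⟩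
  obtain ⟨Q, hQ0, hQ, hdeg, hQeval⟩ := exists_aeval_eq_sum_sub_sum ha ha' hne
  have hR := hsep (n + 1) (reflect n Q) (by rwa [Ne, reflect_eq_zero_iff])
    (fun k => coeff_reflect n Q k ▸ hQ _) (natDegree_reflect_le.trans_lt (by omega))
  rw [norm_aeval_ofReal, Complex.norm_real, Real.norm_eq_abs, abs_of_pos (by positivity)] at hR
  rw [hQeval, aeval_eq_pow_mul_aeval_inv_reflect hlam0.ne' hdeg.le, abs_mul, ← one_div,
    abs_of_pos (by positivity)]
  calc c / 2 / 2 ^ n ≤ c / 2 / 2 ^ n / lam := le_div_self (by positivity) hlam0 hlam.2.le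
    _ = lam ^ n * (c * (1 / lam / 2) ^ (n + 1)) := by
        rw [div_pow, div_pow, one_pow, pow_succ, pow_succ]; field_simp
    _ ≤ _ := by gcongr
end

section
/- Let {E_n = ∏_{i=1}^d [−δ_{i,n}, δ_{i,n}]}_{n≥1} be a sequence of axis-parallel rectangles in ℝ^d such that for each i the sequence (δ_{i,n})_n is non-increasing. Then for any sequence of points (y_n) ⊂ ℝ^d there exists a set M ⊂ ℕ such that: (1) ⋃_{n=1}^∞ (y_n + E_n) ⊂ ⋃_{m∈M} (y_m + 3E_m); and (2) (y_m + E_m) ∩ (y_{m'} + E_{m'}) = ∅ for distinct m, m' ∈ M. -/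
/-- Greedy selection: `n` is good iff its set is disjoint from all earlier good sets. -/
def vitaliGood {α : Type*} (E : ℕ → Set α) : ℕ → Prop
  | n => ∀ m, m < n → vitaliGood E m → Disjoint (E m) (E n)
termination_by n => n

theorem vitaliGood_iff {α : Type*} (E : ℕ → Set α) (n : ℕ) :
    vitaliGood E n ↔ ∀ m, m < n → vitaliGood E m → Disjoint (E m) (E n) := by
  rw [vitaliGood]

/-- A `3r`-covering lemma for nested rectangles. -/
theorem stmt_9 {d : ℕ} (δ : Fin d → ℕ → ℝ) (hmono : ∀ i, Antitone (δ i))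
    (y : ℕ → (Fin d → ℝ)) :
    ∃ M : Set ℕ,
      ((⋃ n, {z : Fin d → ℝ | ∀ i, |z i - y n i| ≤ δ i n}) ⊆
        ⋃ m ∈ M, {z : Fin d → ℝ | ∀ i, |z i - y m i| ≤ 3 * δ i m}) ∧
      ∀ m ∈ M, ∀ m' ∈ M, m ≠ m' →
        Disjoint {z : Fin d → ℝ | ∀ i, |z i - y m i| ≤ δ i m}
          {z : Fin d → ℝ | ∀ i, |z i - y m' i| ≤ δ i m'} := by
  set E : ℕ → Set (Fin d → ℝ) := fun n => {z | ∀ i, |z i - y n i| ≤ δ i n} with hE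
  refine ⟨{n | vitaliGood E n}, ?_, ?_⟩
  · intro z hz
    simp only [Set.mem_iUnion] at hz
    obtain ⟨n, hzn⟩ := hz
    by_cases hn : vitaliGood E n
    · refine Set.mem_biUnion hn ?_
      intro i
      have h1 := hzn i
      have h0 : (0:ℝ) ≤ δ i n := le_trans (abs_nonneg _) h1
      calc |z i - y n i| ≤ δ i n := h1
        _ ≤ 3 * δ i n := by linarith
    · rw [vitaliGood_iff] at hn
      push_neg at hn
      obtain ⟨m, hmn, hgm, hdis⟩ := hn
      rw [Set.not_disjoint_iff] at hdis
      obtain ⟨w, hwm, hwn⟩ := hdis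
      refine Set.mem_biUnion hgm ?_
      intro i
      have h1 := hzn i
      have h2 := hwn i
      have h3 := hwm i
      have h4 : δ i n ≤ δ i m := hmono i (le_of_lt hmn)
      have := abs_sub_abs_le_abs_sub (z i - y m i) (w i - y m i)
      have h5 : |z i - y m i| ≤ |z i - w i| + |w i - y m i| := abs_sub_le _ _ _
      have h6 : |z i - w i| ≤ |z i - y n i| + |y n i - w i| := abs_sub_le _ _ _
      have h7 : |y n i - w i| = |w i - y n i| := abs_sub_comm _ _
      linarith
  · intro m hm m' hm' hne
    rcases lt_or_gt_of_ne hne with h | h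
    · exact (vitaliGood_iff E m').mp hm' m h hm
    · exact ((vitaliGood_iff E m).mp hm m' h hm').symm
end

section
/- Let S_i(x) = A_i x + t_i, i ∈ I, be an affine IFS on ℝ^d with all A_i invertible and ‖A_i‖ < 1, with attractor X and λ(A) = ∑_{i∈I} |Det(A_i)|. Let h: ℕ → [0,∞) satisfy ∑_{n=1}^∞ h(n) < ∞. Then for any sequence (x_n) in X, the set of x ∈ X such that (T_{i_N} ∘ ⋯ ∘ T_{i_1})(x) ∈ B(x_N, (h(N)/λ(A)^N)^{1/d}) for infinitely many finite words (i_1,…,i_N) has Lebesgue measure zero. -/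
/-!
Write `T_w = T_{i_N} ∘ ⋯ ∘ T_{i_1}` for a word `w = (i_1, …, i_N)`. Each `T_i` is affine with
linear part `A_i⁻¹`, so `T_w⁻¹(B)` has measure `|det A_{i_1} ⋯ det A_{i_N}| · |B|`; summing over
all words of length `N` gives at most `λ(A)^N · |B|`. For the ball `B` of radius
`(h(N)/λ(A)^N)^{1/d}` around `x_N` this is at most `h(N) · |B(0,1)|`, which is summable, so
Borel–Cantelli shows that almost every `x` lies in only finitely many of these unions.
-/

open MeasureTheory

/-- The absolute value of the determinant of (the linear part of) a continuous linear
equivalence of `ℝ^d`. -/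
noncomputable def cleDet {d : ℕ}
    (B : EuclideanSpace ℝ (Fin d) ≃L[ℝ] EuclideanSpace ℝ (Fin d)) : ℝ :=
  LinearMap.det
    (ContinuousLinearMap.toLinearMap
      (B : EuclideanSpace ℝ (Fin d) →L[ℝ] EuclideanSpace ℝ (Fin d)))

open Filter Metric Module

section

variable {ι E : Type*} [NormedAddCommGroup E] [NormedSpace ℝ E] [MeasurableSpace E]
  [BorelSpace E] [FiniteDimensional ℝ E] (μ : Measure E) [μ.IsAddHaarMeasure]

/-- The paper's `T_{i_N} ∘ ⋯ ∘ T_{i₁}` for the word `[i₁, …, i_N]`, with `T_i` the inverse of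
`x ↦ A i x + t i`. -/
def inverseWordMap (A : ι → E ≃L[ℝ] E) (t : ι → E) (w : List ι) (x : E) : E :=
  w.foldl (fun y i => (A i).symm (y - t i)) x

lemma addHaar_preimage_affine_symm (A : E ≃L[ℝ] E) (b : E) (s : Set E) :
    μ ((fun x => A.symm (x - b)) ⁻¹' s) =
      ENNReal.ofReal |LinearMap.det (A : E →ₗ[ℝ] E)| * μ s := by
  have hpre : (fun x => A.symm (x - b)) ⁻¹' s = (fun x => x + -b) ⁻¹' (A '' s) := by
    ext x
    simp [sub_eq_add_neg, A.image_eq_preimage_symm]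
  rw [hpre, measure_preimage_add_right, Measure.addHaar_image_continuousLinearEquiv]

lemma addHaar_preimage_inverseWordMap (A : ι → E ≃L[ℝ] E) (t : ι → E) (w : List ι)
    (s : Set E) :
    μ (inverseWordMap A t w ⁻¹' s) =
      (w.map fun i => ENNReal.ofReal |LinearMap.det (A i : E →ₗ[ℝ] E)|).prod * μ s := by
  induction w generalizing s with
  | nil => rw [List.map_nil, List.prod_nil, one_mul]; rfl
  | cons i w ih =>
    have hpre : inverseWordMap A t (i :: w) ⁻¹' s =
        (fun x => (A i).symm (x - t i)) ⁻¹' (inverseWordMap A t w ⁻¹' s) := rfl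
    rw [hpre, addHaar_preimage_affine_symm, ih, List.map_cons, List.prod_cons, mul_assoc]

lemma addHaar_iUnion_preimage_inverseWordMap_le [Fintype ι] (A : ι → E ≃L[ℝ] E) (t : ι → E)
    (N : ℕ) (s : Set E) :
    μ (⋃ v : Fin N → ι, inverseWordMap A t (List.ofFn v) ⁻¹' s) ≤
      (∑ i, ENNReal.ofReal |LinearMap.det (A i : E →ₗ[ℝ] E)|) ^ N * μ s := by
  refine (measure_iUnion_fintype_le _ _).trans_eq ?_
  rw [Fintype.sum_pow, Finset.sum_mul]
  refine Finset.sum_congr rfl fun v _ => ?_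
  rw [addHaar_preimage_inverseWordMap, List.map_ofFn, List.prod_ofFn]
  rfl

lemma List.exists_mem_le_length_of_infinite {α : Type*} [Finite α] {S : Set (List α)}
    (hS : S.Infinite) (n : ℕ) : ∃ w ∈ S, n ≤ w.length := by
  by_contra! hlt
  exact hS ((List.finite_length_lt α n).subset hlt)

theorem addHaar_setOf_infinite_inverseWordMap_mem_eq_zero [Fintype ι] (A : ι → E ≃L[ℝ] E)
    (t : ι → E) (s : ℕ → Set E)
    (hs : ∑' N, (∑ i, ENNReal.ofReal |LinearMap.det (A i : E →ₗ[ℝ] E)|) ^ N * μ (s N) ≠ ⊤) :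
    μ {x | {w : List ι | inverseWordMap A t w x ∈ s w.length}.Infinite} = 0 := by
  set hits : ℕ → Set E := fun N => ⋃ v : Fin N → ι, inverseWordMap A t (List.ofFn v) ⁻¹' s N
  have hnull : μ (limsup hits atTop) = 0 := measure_limsup_atTop_eq_zero
    (ne_top_of_le_ne_top hs (ENNReal.tsum_le_tsum fun N =>
      addHaar_iUnion_preimage_inverseWordMap_le μ A t N (s N)))
  refine measure_mono_null (fun x hx => ?_) hnull
  rw [mem_limsup_iff_frequently_mem, frequently_atTop]
  intro n
  obtain ⟨w, hw, hlen⟩ := List.exists_mem_le_length_of_infinite hx n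
  refine ⟨w.length, hlen, Set.mem_iUnion.mpr ⟨w.get, ?_⟩⟩
  rwa [Set.mem_preimage, List.ofFn_get]

lemma ofReal_mul_addHaar_closedBall_le (hE : 0 < finrank ℝ E) {a b : ℝ} (ha : 0 ≤ a)
    (hb : 0 ≤ b) (x : E) :
    ENNReal.ofReal b * μ (closedBall x ((a / b) ^ ((1 : ℝ) / finrank ℝ E))) ≤
      ENNReal.ofReal a * μ (ball 0 1) := by
  have hab : 0 ≤ a / b := div_nonneg ha hb
  have hpow : ((a / b) ^ ((1 : ℝ) / finrank ℝ E)) ^ finrank ℝ E = a / b := by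
    rw [← Real.rpow_natCast, ← Real.rpow_mul hab, one_div_mul_cancel (by positivity),
      Real.rpow_one]
  rw [Measure.addHaar_closedBall μ x (Real.rpow_nonneg hab _), hpow, ← mul_assoc,
    ← ENNReal.ofReal_mul hb]
  gcongr
  rcases hb.eq_or_lt with rfl | hb
  · simpa using ha
  · rw [mul_div_cancel₀ a hb.ne']

end

theorem stmt_10_general {d : ℕ} (hd : 0 < d) {ι : Type*} [Fintype ι]
    (A : ι → (EuclideanSpace ℝ (Fin d) ≃L[ℝ] EuclideanSpace ℝ (Fin d)))
    (t : ι → EuclideanSpace ℝ (Fin d))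
    (X : Set (EuclideanSpace ℝ (Fin d)))
    (h : ℕ → ℝ) (hh0 : ∀ n, 0 ≤ h n) (hh : Summable h)
    (xs : ℕ → EuclideanSpace ℝ (Fin d)) :
    volume {x ∈ X |
      {w : List ι | w ≠ [] ∧
        w.foldl (fun y i => (A i).symm (y - t i)) x ∈
          Metric.closedBall (xs w.length)
            ((h w.length / (∑ i, |cleDet (A i)|) ^ w.length) ^ ((1 : ℝ) / d))}.Infinite}
      = 0 := by
  set L := ∑ i, |cleDet (A i)|
  have hL0 : 0 ≤ L := Finset.sum_nonneg fun i _ => abs_nonneg _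
  have hL : ∑ i, ENNReal.ofReal
      |LinearMap.det (A i : EuclideanSpace ℝ (Fin d) →ₗ[ℝ] EuclideanSpace ℝ (Fin d))| =
      ENNReal.ofReal L :=
    (ENNReal.ofReal_sum_of_nonneg fun i _ => abs_nonneg _).symm
  have hfinrank : 0 < finrank ℝ (EuclideanSpace ℝ (Fin d)) := by rwa [finrank_euclideanSpace_fin]
  have hsum : ∑' N, ENNReal.ofReal (h N) * volume (ball (0 : EuclideanSpace ℝ (Fin d)) 1) ≠ ⊤ := by
    rw [ENNReal.tsum_mul_right, ← ENNReal.ofReal_tsum_of_nonneg hh0 hh]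
    exact ENNReal.mul_ne_top ENNReal.ofReal_ne_top measure_ball_lt_top.ne
  have hnull := addHaar_setOf_infinite_inverseWordMap_mem_eq_zero volume A t
    (fun N => closedBall (xs N) ((h N / L ^ N) ^ ((1 : ℝ) / d))) <| by
      refine ne_top_of_le_ne_top hsum (ENNReal.tsum_le_tsum fun N => ?_)
      rw [hL, ← ENNReal.ofReal_pow hL0]
      simpa only [finrank_euclideanSpace_fin] using
        ofReal_mul_addHaar_closedBall_le volume hfinrank (hh0 N) (pow_nonneg hL0 N) (xs N)
  exact measure_mono_null (fun x hx => hx.2.mono fun w hw => hw.2) hnull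

/-- If `∑ h(n) < ∞` then the shrinking target set `W(S, (x_n), h)` is Lebesgue null. -/
theorem stmt_10 {d : ℕ} (hd : 0 < d) {ι : Type*} [Fintype ι]
    (A : ι → (EuclideanSpace ℝ (Fin d) ≃L[ℝ] EuclideanSpace ℝ (Fin d)))
    (hA : ∀ i, ‖(A i : EuclideanSpace ℝ (Fin d) →L[ℝ] EuclideanSpace ℝ (Fin d))‖ < 1)
    (t : ι → EuclideanSpace ℝ (Fin d))
    (X : Set (EuclideanSpace ℝ (Fin d))) (hXc : IsCompact X) (hXne : X.Nonempty)
    (hX : X = ⋃ i, (fun x => A i x + t i) '' X)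
    (h : ℕ → ℝ) (hh0 : ∀ n, 0 ≤ h n) (hh : Summable h)
    (xs : ℕ → EuclideanSpace ℝ (Fin d)) (hxs : ∀ n, xs n ∈ X) :
    volume {x ∈ X |
      {w : List ι | w ≠ [] ∧
        w.foldl (fun y i => (A i).symm (y - t i)) x ∈
          Metric.closedBall (xs w.length)
            ((h w.length / (∑ i, |cleDet (A i)|) ^ w.length) ^ ((1 : ℝ) / d))}.Infinite}
      = 0 :=
  stmt_10_general hd A t X h hh0 hh xs
end

section
/- Suppose an affine IFS {S_i}_{i∈I} on ℝ^d, with invertible matrix parts A_i satisfying ‖A_i‖ < 1, admits two distinct words j', j of equal length k with S_{j'} = S_j. Let (x_n) be any sequence in the attractor X and (E_n) a sequence of Borel sets with L_d(E_n) ≤ c·λ(A)^{-n} for some constant c. Then the set of x ∈ X such that (T_{i_N} ∘ ⋯ ∘ T_{i_1})(x) ∈ x_N + E_N for infinitely many words (i_1,…,i_N) has Lebesgue measure zero. -/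
open MeasureTheory ENNReal

section Aux

variable {d : ℕ} {ι : Type*} [Fintype ι]



variable (A : ι → ((EuclideanSpace ℝ (Fin d)) ≃L[ℝ] (EuclideanSpace ℝ (Fin d)))) (t : ι → (EuclideanSpace ℝ (Fin d)))

/-- forward composition of inverse maps along a word -/
noncomputable def TlF (w : List ι) (x : (EuclideanSpace ℝ (Fin d))) : (EuclideanSpace ℝ (Fin d)) :=
  w.foldl (fun y i => (A i).symm (y - t i)) x

/-- composition of the affine maps along a word -/
noncomputable def SlF (w : List ι) (x : (EuclideanSpace ℝ (Fin d))) : (EuclideanSpace ℝ (Fin d)) :=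
  w.foldr (fun i z => A i z + t i) x

lemma TlF_nil (x : (EuclideanSpace ℝ (Fin d))) : TlF A t [] x = x := rfl

lemma TlF_cons (i : ι) (w : List ι) (x : (EuclideanSpace ℝ (Fin d))) :
    TlF A t (i :: w) x = TlF A t w ((A i).symm (x - t i)) := rfl

lemma SlF_nil (x : (EuclideanSpace ℝ (Fin d))) : SlF A t [] x = x := rfl

lemma SlF_cons (i : ι) (w : List ι) (x : (EuclideanSpace ℝ (Fin d))) :
    SlF A t (i :: w) x = A i (SlF A t w x) + t i := rfl

lemma TlF_append (a b : List ι) (x : (EuclideanSpace ℝ (Fin d))) :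
    TlF A t (a ++ b) x = TlF A t b (TlF A t a x) :=
  List.foldl_append ..

lemma SlF_TlF (w : List ι) (x : (EuclideanSpace ℝ (Fin d))) : SlF A t w (TlF A t w x) = x := by
  induction w generalizing x with
  | nil => rfl
  | cons i w ih =>
    rw [TlF_cons, SlF_cons, ih]
    simp

lemma TlF_SlF (w : List ι) (x : (EuclideanSpace ℝ (Fin d))) : TlF A t w (SlF A t w x) = x := by
  induction w generalizing x with
  | nil => rfl
  | cons i w ih =>
    rw [TlF_cons, SlF_cons]
    simpa using ih x

lemma cleDet_ne_zero (i : ι) : cleDet (A i) ≠ 0 := by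
  have h : IsUnit (LinearMap.det ((A i).toLinearEquiv : (EuclideanSpace ℝ (Fin d)) →ₗ[ℝ] (EuclideanSpace ℝ (Fin d)))) :=
    LinearEquiv.isUnit_det' (A i).toLinearEquiv
  simpa [cleDet] using h.ne_zero

/-- total weight of a word -/
noncomputable def wgt (w : List ι) : ℝ≥0∞ :=
  (w.map fun i => ENNReal.ofReal |cleDet (A i)|).prod

lemma wgt_nil : wgt A ([] : List ι) = 1 := rfl

lemma wgt_append (a b : List ι) : wgt A (a ++ b) = wgt A a * wgt A b := by
  simp [wgt]

lemma wgt_ofFn {n : ℕ} (f : Fin n → ι) :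
    wgt A (List.ofFn f) = ∏ l, ENNReal.ofReal |cleDet (A (f l))| := by
  simp [wgt, List.map_ofFn, List.prod_ofFn, Function.comp]

lemma vol_T_preimage (i : ι) (C : Set (EuclideanSpace ℝ (Fin d))) :
    volume ((fun y : (EuclideanSpace ℝ (Fin d)) => (A i).symm (y - t i)) ⁻¹' C)
      = ENNReal.ofReal |cleDet (A i)| * volume C := by
  have h1 : (fun y : (EuclideanSpace ℝ (Fin d)) => (A i).symm (y - t i)) ⁻¹' C
      = (fun y : (EuclideanSpace ℝ (Fin d)) => y + (-t i)) ⁻¹' (((A i).symm : (EuclideanSpace ℝ (Fin d)) ≃L[ℝ] (EuclideanSpace ℝ (Fin d))) ⁻¹' C) := by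
    ext y
    simp [sub_eq_add_neg]
  rw [h1, measure_preimage_add_right, Measure.addHaar_preimage_continuousLinearEquiv]
  simp [cleDet]

lemma vol_TlF_preimage (w : List ι) (C : Set (EuclideanSpace ℝ (Fin d))) :
    volume ((fun x => TlF A t w x) ⁻¹' C) = wgt A w * volume C := by
  induction w generalizing C with
  | nil => simp [TlF, wgt]
  | cons i w ih =>
    have h : (fun x => TlF A t (i :: w) x) ⁻¹' C
        = (fun y : (EuclideanSpace ℝ (Fin d)) => (A i).symm (y - t i)) ⁻¹' ((fun x => TlF A t w x) ⁻¹' C) := rfl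
    rw [h, vol_T_preimage, ih, wgt]
    simp [wgt, mul_assoc]

/-- concatenation of `q` blocks of length `k` and a tail of length `r` -/
def joinW {k r : ℕ} : (q : ℕ) → (Fin q → (Fin k → ι)) → (Fin r → ι) → List ι
  | 0, _, tl => List.ofFn tl
  | q + 1, bs, tl => List.ofFn (bs 0) ++ joinW q (fun m => bs m.succ) tl

lemma length_joinW {k r : ℕ} (q : ℕ) (bs : Fin q → (Fin k → ι)) (tl : Fin r → ι) :
    (joinW q bs tl).length = q * k + r := by
  induction q with
  | zero => simp [joinW]
  | succ q ih =>
    simp only [joinW, List.length_append, List.length_ofFn, ih]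
    ring

lemma wgt_joinW {k r : ℕ} (q : ℕ) (bs : Fin q → (Fin k → ι)) (tl : Fin r → ι) :
    wgt A (joinW q bs tl)
      = (∏ m, wgt A (List.ofFn (bs m))) * wgt A (List.ofFn tl) := by
  induction q with
  | zero => simp [joinW]
  | succ q ih =>
    rw [joinW, wgt_append, ih, Fin.prod_univ_succ, mul_assoc]

lemma ofFn_comp_cast {m n : ℕ} (h : m = n) (f : Fin m → ι) :
    List.ofFn (f ∘ Fin.cast h.symm) = List.ofFn f := by
  subst h
  rfl

lemma exists_joinW {k : ℕ} (j' j : Fin k → ι) (hjj : j' ≠ j)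
    (hT : ∀ x, TlF A t (List.ofFn j) x = TlF A t (List.ofFn j') x) :
    ∀ (q : ℕ) {r : ℕ} (w : List ι), w.length = q * k + r →
      ∃ (bs : Fin q → (Fin k → ι)) (tl : Fin r → ι),
        (∀ m, bs m ≠ j) ∧ ∀ x, TlF A t w x = TlF A t (joinW q bs tl) x := by
  intro q
  induction q with
  | zero =>
    intro r w hw
    have hw' : w.length = r := by simpa using hw
    refine ⟨Fin.elim0, w.get ∘ Fin.cast hw'.symm, fun m => m.elim0, fun x => ?_⟩
    have hofn : List.ofFn (w.get ∘ Fin.cast hw'.symm) = w := by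
      rw [ofFn_comp_cast hw' w.get, List.ofFn_get]
    rw [joinW, hofn]
  | succ q ih =>
    intro r w hw
    rw [Nat.succ_mul] at hw
    have hkw : k ≤ w.length := by omega
    set b : List ι := w.take k with hbdef
    set w2 : List ι := w.drop k with hw2def
    have hb : b.length = k := by
      simp [hbdef, List.length_take]
      omega
    have hw2 : w2.length = q * k + r := by
      simp [hw2def]
      omega
    have hsplit : w = b ++ w2 := (List.take_append_drop k w).symm
    classical
    -- the replaced block
    set b' : List ι := if b = List.ofFn j then List.ofFn j' else b with hb'def
    have hb' : b'.length = k := by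
      by_cases hc : b = List.ofFn j <;> simp [hb'def, hc, hb]
    have hb'T : ∀ x, TlF A t b x = TlF A t b' x := by
      intro x
      by_cases hc : b = List.ofFn j
      · rw [hb'def, if_pos hc, hc]
        exact hT x
      · rw [hb'def, if_neg hc]
    have hb'ne : b' ≠ List.ofFn j := by
      by_cases hc : b = List.ofFn j
      · rw [hb'def, if_pos hc]
        intro hcontra
        exact hjj (List.ofFn_injective hcontra)
      · rwa [hb'def, if_neg hc]
    -- represent b' as a function
    set g : Fin k → ι := b'.get ∘ Fin.cast hb'.symm with hgdef
    have hg : List.ofFn g = b' := by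
      rw [hgdef, ofFn_comp_cast hb' b'.get, List.ofFn_get]
    have hgne : g ≠ j := fun hc => hb'ne (by rw [← hg, hc])
    obtain ⟨bs', tl, hne', hT'⟩ := ih w2 hw2
    refine ⟨Fin.cons g bs', tl, ?_, fun x => ?_⟩
    · intro m
      refine Fin.cases ?_ ?_ m
      · simpa using hgne
      · intro m'
        simpa using hne' m'
    · have hjoin : joinW (q + 1) (Fin.cons g bs') tl
          = List.ofFn g ++ joinW q bs' tl := by
        simp only [joinW, Fin.cons_zero, Fin.cons_succ]
      rw [hjoin, hsplit, TlF_append, TlF_append, hb'T, ← hg, hT']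

lemma TlF_overlap {k : ℕ} (j' j : Fin k → ι)
    (hover : (fun x => (List.ofFn j').foldr (fun i z => A i z + t i) x)
      = (fun x => (List.ofFn j).foldr (fun i z => A i z + t i) x)) :
    ∀ x, TlF A t (List.ofFn j) x = TlF A t (List.ofFn j') x := by
  have hS : ∀ x, SlF A t (List.ofFn j') x = SlF A t (List.ofFn j) x := by
    intro x
    exact congrFun hover x
  intro x
  conv_lhs => rw [← SlF_TlF A t (List.ofFn j') x, hS, TlF_SlF]

end Aux

/-- Under an exact overlap `S_{j'} = S_j` and targets of measure `≤ c λ(A)^{-n}`,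
the shrinking target set has Lebesgue measure zero. -/
theorem stmt_13 {d : ℕ} (hd : 0 < d) {ι : Type*} [Fintype ι]
    (A : ι → (EuclideanSpace ℝ (Fin d) ≃L[ℝ] EuclideanSpace ℝ (Fin d)))
    (hA : ∀ i, ‖(A i : EuclideanSpace ℝ (Fin d) →L[ℝ] EuclideanSpace ℝ (Fin d))‖ < 1)
    (t : ι → EuclideanSpace ℝ (Fin d))
    (X : Set (EuclideanSpace ℝ (Fin d))) (hXc : IsCompact X) (hXne : X.Nonempty)
    (hX : X = ⋃ i, (fun x => A i x + t i) '' X)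
    (k : ℕ) (j' j : Fin k → ι) (hjj : j' ≠ j)
    (hover : (fun x => (List.ofFn j').foldr (fun i z => A i z + t i) x)
      = (fun x => (List.ofFn j).foldr (fun i z => A i z + t i) x))
    (xs : ℕ → EuclideanSpace ℝ (Fin d)) (hxs : ∀ n, xs n ∈ X)
    (E : ℕ → Set (EuclideanSpace ℝ (Fin d))) (hE : ∀ n, MeasurableSet (E n))
    (c : ℝ) (hEm : ∀ n, volume (E n) ≤ ENNReal.ofReal (c / (∑ i, |cleDet (A i)|) ^ n)) :
    volume {x ∈ X |
      {w : List ι | w ≠ [] ∧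
        w.foldl (fun y i => (A i).symm (y - t i)) x - xs w.length ∈ E w.length}.Infinite}
      = 0 := by
  classical
  set W : ι → ℝ≥0∞ := fun i => ENNReal.ofReal |cleDet (A i)| with hW
  have hk : 0 < k := by
    rcases Nat.eq_zero_or_pos k with hk0 | hk
    · subst hk0; exact absurd (Subsingleton.elim j' j) hjj
    · exact hk
  haveI : NeZero k := ⟨hk.ne'⟩
  haveI : Nonempty ι := ⟨j ⟨0, hk⟩⟩
  have hdet : ∀ i, 0 < |cleDet (A i)| := fun i => abs_pos.2 (cleDet_ne_zero A i)
  set Λr : ℝ := ∑ i, |cleDet (A i)| with hΛr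
  set Λ : ℝ≥0∞ := ∑ i, W i with hΛ
  have hΛr_pos : 0 < Λr := Finset.sum_pos (fun i _ => hdet i) Finset.univ_nonempty
  have hΛeq : Λ = ENNReal.ofReal Λr := by
    rw [hΛ, hΛr, ENNReal.ofReal_sum_of_nonneg (fun i _ => abs_nonneg _)]
  have hΛ0 : Λ ≠ 0 := by rw [hΛeq]; simpa using hΛr_pos
  have hΛtop : Λ ≠ ⊤ := by rw [hΛeq]; exact ENNReal.ofReal_ne_top
  have hWne : ∀ i, W i ≠ 0 := fun i => (ENNReal.ofReal_pos.2 (hdet i)).ne'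
  set P : ℝ≥0∞ := ∑ b : {b : Fin k → ι // b ≠ j}, ∏ l, W ((b : Fin k → ι) l) with hP
  have hsum_all : (Λ : ℝ≥0∞) ^ k = ∑ b : Fin k → ι, ∏ l, W (b l) := by
    rw [hΛ]; exact Fintype.sum_pow W k
  have hD0 : (∏ l, W (j l)) ≠ 0 := Finset.prod_ne_zero_iff.2 (fun l _ => hWne (j l))
  have hsplit : P + ∏ l, W (j l) = Λ ^ k := by
    rw [hsum_all, hP,
      ← Finset.sum_subtype (Finset.univ.filter (fun b => b ≠ j))
        (by intro b; simp) (fun b : Fin k → ι => ∏ l, W (b l)),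
      ← Finset.sum_filter_add_sum_filter_not Finset.univ (fun b => b ≠ j)
        (fun b : Fin k → ι => ∏ l, W (b l))]
    congr 1
    have hfe : Finset.univ.filter (fun b : Fin k → ι => ¬ b ≠ j) = {j} := by
      ext b; simp
    rw [hfe, Finset.sum_singleton]
  have hΛktop : (Λ : ℝ≥0∞) ^ k ≠ ⊤ := ENNReal.pow_ne_top hΛtop
  have hΛk0 : (Λ : ℝ≥0∞) ^ k ≠ 0 := pow_ne_zero k hΛ0
  have hPtop : P ≠ ⊤ := by
    intro h
    apply hΛktop
    rw [← hsplit, h]; simp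
  have hPlt : P < Λ ^ k := by
    calc P < P + ∏ l, W (j l) := ENNReal.lt_add_right hPtop hD0
      _ = Λ ^ k := hsplit
  set ρ : ℝ≥0∞ := P / Λ ^ k with hρdef
  have hρlt : ρ < 1 := by
    rw [hρdef, ENNReal.div_lt_iff (Or.inl hΛk0) (Or.inl hΛktop)]
    simpa using hPlt
  set Bad : ℕ → Set (EuclideanSpace ℝ (Fin d)) := fun N =>
    ⋃ v : (Fin (N / k) → {b : Fin k → ι // b ≠ j}) × (Fin (N % k) → ι),
      (fun x => TlF A t (joinW (N / k) (fun m => (v.1 m : Fin k → ι)) v.2) x) ⁻¹'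
        {y | y - xs N ∈ E N} with hBad
  have hvolB : ∀ N, volume {y : EuclideanSpace ℝ (Fin d) | y - xs N ∈ E N} = volume (E N) := by
    intro N
    have h1 : {y : EuclideanSpace ℝ (Fin d) | y - xs N ∈ E N}
        = (fun y => y + (-xs N)) ⁻¹' E N := by ext y; simp [sub_eq_add_neg]
    rw [h1, measure_preimage_add_right]
  have hBadN : ∀ N, volume (Bad N) ≤ ENNReal.ofReal c * ρ ^ (N / k) := by
    intro N
    have hNq : k * (N / k) + N % k = N := Nat.div_add_mod N k
    have h1 : ∑ bs : Fin (N / k) → {b : Fin k → ι // b ≠ j},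
        ∏ m, ∏ l, W ((bs m : Fin k → ι) l) = P ^ (N / k) :=
      (Fintype.sum_pow (fun b : {b : Fin k → ι // b ≠ j} => ∏ l, W ((b : Fin k → ι) l)) _).symm
    have h2 : ∑ tl : Fin (N % k) → ι, ∏ l, W (tl l) = Λ ^ (N % k) := by
      rw [hΛ]; exact (Fintype.sum_pow W _).symm
    have hsumv : ∑ v : (Fin (N / k) → {b : Fin k → ι // b ≠ j}) × (Fin (N % k) → ι),
        (∏ m, ∏ l, W ((v.1 m : Fin k → ι) l)) * ∏ l, W (v.2 l)
        = P ^ (N / k) * Λ ^ (N % k) := by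
      rw [← h1, ← h2, Finset.sum_mul_sum, Fintype.sum_prod_type]
    have step1 : volume (Bad N) ≤ (P ^ (N / k) * Λ ^ (N % k)) * volume (E N) := by
      refine le_trans (measure_iUnion_le _) ?_
      rw [tsum_fintype]
      refine le_of_eq ?_
      calc ∑ v : (Fin (N / k) → {b : Fin k → ι // b ≠ j}) × (Fin (N % k) → ι),
            volume ((fun x => TlF A t (joinW (N / k) (fun m => (v.1 m : Fin k → ι)) v.2) x) ⁻¹'
              {y | y - xs N ∈ E N})
          = ∑ v : (Fin (N / k) → {b : Fin k → ι // b ≠ j}) × (Fin (N % k) → ι),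
            ((∏ m, ∏ l, W ((v.1 m : Fin k → ι) l)) * ∏ l, W (v.2 l)) * volume (E N) := by
            refine Finset.sum_congr rfl fun v _ => ?_
            rw [vol_TlF_preimage, hvolB, wgt_joinW]
            congr 2
            · exact Finset.prod_congr rfl fun m _ => wgt_ofFn A _
            · exact wgt_ofFn A _
        _ = (P ^ (N / k) * Λ ^ (N % k)) * volume (E N) := by rw [← Finset.sum_mul, hsumv]
    have hΛN : (Λ : ℝ≥0∞) ^ N = (Λ ^ k) ^ (N / k) * Λ ^ (N % k) := by
      conv_lhs => rw [← hNq]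
      rw [pow_add, pow_mul]
    have hofReal : ENNReal.ofReal (c / Λr ^ N)
        = ENNReal.ofReal c * (((Λ ^ k) ^ (N / k) * Λ ^ (N % k)))⁻¹ := by
      rw [ENNReal.ofReal_div_of_pos (pow_pos hΛr_pos N), div_eq_mul_inv]
      congr 2
      rw [ENNReal.ofReal_pow hΛr_pos.le, ← hΛeq, hΛN]
    have harith : (P ^ (N / k) * Λ ^ (N % k))
          * (ENNReal.ofReal c * (((Λ ^ k) ^ (N / k) * Λ ^ (N % k)))⁻¹)
        = ENNReal.ofReal c * ρ ^ (N / k) := by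
      have hinv : (((Λ ^ k) ^ (N / k) * Λ ^ (N % k)))⁻¹
          = ((Λ ^ k) ^ (N / k))⁻¹ * (Λ ^ (N % k))⁻¹ :=
        ENNReal.mul_inv (Or.inl (pow_ne_zero _ hΛk0)) (Or.inl (ENNReal.pow_ne_top hΛktop))
      have hcancel : Λ ^ (N % k) * (Λ ^ (N % k))⁻¹ = 1 :=
        ENNReal.mul_inv_cancel (pow_ne_zero _ hΛ0) (ENNReal.pow_ne_top hΛtop)
      have hρq : ρ ^ (N / k) = P ^ (N / k) * ((Λ ^ k) ^ (N / k))⁻¹ := by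
        rw [hρdef, div_eq_mul_inv, mul_pow]
        congr 1
        exact (ENNReal.inv_pow).symm
      calc (P ^ (N / k) * Λ ^ (N % k))
            * (ENNReal.ofReal c * (((Λ ^ k) ^ (N / k) * Λ ^ (N % k)))⁻¹)
          = ENNReal.ofReal c * (P ^ (N / k) * ((Λ ^ k) ^ (N / k))⁻¹)
              * (Λ ^ (N % k) * (Λ ^ (N % k))⁻¹) := by rw [hinv]; ring
        _ = ENNReal.ofReal c * ρ ^ (N / k) := by rw [hcancel, ← hρq, mul_one]
    calc volume (Bad N) ≤ (P ^ (N / k) * Λ ^ (N % k)) * volume (E N) := step1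
      _ ≤ (P ^ (N / k) * Λ ^ (N % k)) * ENNReal.ofReal (c / Λr ^ N) := by
          exact mul_le_mul_right (hEm N) _
      _ = ENNReal.ofReal c * ρ ^ (N / k) := by rw [hofReal, harith]
  have htsum : (∑' N, volume (Bad N)) ≠ ⊤ := by
    refine ne_top_of_le_ne_top ?_ (ENNReal.tsum_le_tsum hBadN)
    rw [ENNReal.tsum_mul_left]
    refine ENNReal.mul_ne_top ENNReal.ofReal_ne_top ?_
    have he : ∑' p : ℕ × Fin k, ρ ^ (((Nat.divModEquiv k).symm p) / k)
        = ∑' N : ℕ, ρ ^ (N / k) :=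
      (Nat.divModEquiv k).symm.tsum_eq (fun N => ρ ^ (N / k))
    rw [← he]
    have hval : ∀ p : ℕ × Fin k, ((Nat.divModEquiv k).symm p) / k = p.1 := by
      intro p
      show (p.1 * k + (p.2 : ℕ)) / k = p.1
      rw [mul_comm, Nat.mul_add_div hk, Nat.div_eq_of_lt p.2.is_lt, add_zero]
    have hrw : ∑' p : ℕ × Fin k, ρ ^ (((Nat.divModEquiv k).symm p) / k)
        = (k : ℝ≥0∞) * ∑' a : ℕ, ρ ^ a := by
      calc ∑' p : ℕ × Fin k, ρ ^ (((Nat.divModEquiv k).symm p) / k)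
          = ∑' p : ℕ × Fin k, ρ ^ p.1 := tsum_congr fun p => by rw [hval p]
        _ = ∑' (a : ℕ) (_ : Fin k), ρ ^ a := ENNReal.tsum_prod (f := fun a _ => ρ ^ a)
        _ = ∑' a : ℕ, (k : ℝ≥0∞) * ρ ^ a := by
            refine tsum_congr fun a => ?_
            rw [tsum_fintype]
            simp [Finset.sum_const, nsmul_eq_mul]
        _ = (k : ℝ≥0∞) * ∑' a : ℕ, ρ ^ a := ENNReal.tsum_mul_left
    rw [hrw]
    refine ENNReal.mul_ne_top (ENNReal.natCast_ne_top k) ?_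
    rw [ENNReal.tsum_geometric]
    refine ENNReal.inv_ne_top.2 ?_
    intro h0
    exact absurd (tsub_eq_zero_iff_le.1 h0) (not_le.2 hρlt)
  refine measure_mono_null ?_ (MeasureTheory.measure_limsup_cofinite_eq_zero htsum)
  rw [Filter.cofinite.limsup_set_eq]
  rintro x ⟨hxX, hinf⟩
  show {n | x ∈ Bad n}.Infinite
  have hinf' : {w : List ι | w ≠ [] ∧ TlF A t w x - xs w.length ∈ E w.length}.Infinite := hinf
  set Wset : Set (List ι) :=
    {w : List ι | w ≠ [] ∧ TlF A t w x - xs w.length ∈ E w.length} with hWset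
  have hLinf : (List.length '' Wset).Infinite := by
    by_contra hfin
    rw [Set.not_infinite] at hfin
    refine hinf' (Set.Finite.subset (hfin.biUnion fun n _ => List.finite_length_eq ι n) ?_)
    intro w hw
    exact Set.mem_biUnion ⟨w, hw, rfl⟩ rfl
  refine Set.Infinite.mono ?_ hLinf
  rintro N ⟨w, hwmem, rfl⟩
  obtain ⟨hwne, hwcond⟩ := hwmem
  have hlen : w.length = (w.length / k) * k + w.length % k := by
    rw [mul_comm]; exact (Nat.div_add_mod w.length k).symm
  obtain ⟨bs, tl, hne, hTeq⟩ :=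
    exists_joinW A t j' j hjj (TlF_overlap A t j' j hover) (w.length / k) w hlen
  rw [hBad]
  refine Set.mem_iUnion.2 ⟨(fun m => ⟨bs m, hne m⟩, tl), ?_⟩
  show TlF A t (joinW (w.length / k) (fun m => bs m) tl) x - xs w.length ∈ E w.length
  rw [← hTeq x]
  exact hwcond
end
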